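/- arXiv:2502.12787 — 2 statements merged into one kernel-verified Lean document; each statement's English description precedes it below -/
import Mathlib

section
/- Let n ≥ 1 and let r_1, …, r_n be positive integers with r_1 + ⋯ + r_n = σ. Set r = ⌊σ/n⌋, x = n(r+1) − σ and y = σ − nr. Then ∏_{i=1}^n (r_i!)^{1/r_i} ≤ (r!)^{x/r} · ((r+1)!)^{y/(r+1)}, where the powers are real powers; that is, the product ∏_{i=1}^n (r_i!)^{1/r_i} over positive integers summing to σ is maximized when every r_i equals ⌊σ/n⌋ or ⌊σ/n⌋ + 1. -/
open scoped BigOperators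

namespace BGM

/-- The permanent of a square matrix with natural number entries. -/
def perm {n : ℕ} (M : Matrix (Fin n) (Fin n) ℕ) : ℕ :=
  ∑ φ : Equiv.Perm (Fin n), ∏ i, M i (φ i)

/-- `M` is a (0,1)-matrix. -/
def IsZeroOne {n : ℕ} (M : Matrix (Fin n) (Fin n) ℕ) : Prop :=
  ∀ i j, M i j = 0 ∨ M i j = 1

/-- The number of entries of `M` equal to `0`. -/
def zeroCount {n : ℕ} (M : Matrix (Fin n) (Fin n) ℕ) : ℕ :=
  (Finset.univ.filter fun p : Fin n × Fin n => M p.1 p.2 = 0).card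

/-- `𝒰(n, τ)`: the n×n (0,1)-matrices with exactly τ zero entries. -/
def Uclass (n τ : ℕ) : Set (Matrix (Fin n) (Fin n) ℕ) :=
  {M | IsZeroOne M ∧ zeroCount M = τ}

/-- `μ(n, τ) = max {per A : A ∈ 𝒰(n, τ)}`. -/
noncomputable def mu (n τ : ℕ) : ℕ :=
  sSup (perm '' Uclass n τ)

/-- `𝒜(n, k)`: the n×n (0,1)-matrices with exactly k ones in each row and column. -/
def Aclass (n k : ℕ) : Set (Matrix (Fin n) (Fin n) ℕ) :=
  {M | IsZeroOne M ∧ (∀ i, ∑ j, M i j = k) ∧ (∀ j, ∑ i, M i j = k)}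

/-- `P` is a permutation matrix. -/
def IsPermMatrix {n : ℕ} (P : Matrix (Fin n) (Fin n) ℕ) : Prop :=
  ∃ e : Equiv.Perm (Fin n), ∀ i j, P i j = if j = e i then 1 else 0

/-- `A` and `B` are combinatorially equivalent: `B = PAQ` or `B = PAᵀQ` for
permutation matrices `P`, `Q`. -/
def CombEquiv {n : ℕ} (A B : Matrix (Fin n) (Fin n) ℕ) : Prop :=
  ∃ P Q, IsPermMatrix P ∧ IsPermMatrix Q ∧ (B = P * A * Q ∨ B = P * A.transpose * Q)

/-- Index of the block (of consecutive sizes `L`) containing position `i`. -/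
def blockIdx : List ℕ → ℕ → ℕ
  | [], _ => 0
  | s :: L, i => if i < s then 0 else blockIdx L (i - s) + 1

/-- The n×n block-diagonal direct sum of all-ones blocks of sizes `L`
(with `L.sum = n`). -/
def listBlocks (n : ℕ) (L : List ℕ) : Matrix (Fin n) (Fin n) ℕ :=
  Matrix.of fun i j => if blockIdx L (i : ℕ) = blockIdx L (j : ℕ) then 1 else 0

/-- The n×n block-diagonal matrix with a head block `B` (of size `m`) followed by
all-ones blocks of sizes `L` (with `m + L.sum = n`). -/
def headBlocks (n : ℕ) {m : ℕ} (B : Matrix (Fin m) (Fin m) ℕ) (L : List ℕ) :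
    Matrix (Fin n) (Fin n) ℕ :=
  Matrix.of fun i j =>
    if h : (i : ℕ) < m ∧ (j : ℕ) < m then B ⟨(i : ℕ), h.1⟩ ⟨(j : ℕ), h.2⟩
    else if m ≤ (i : ℕ) ∧ m ≤ (j : ℕ) ∧
        blockIdx L ((i : ℕ) - m) = blockIdx L ((j : ℕ) - m) then 1 else 0

/-- `M` with the `(i0, j0)` entry changed to `1`. -/
def setOne {n : ℕ} (M : Matrix (Fin n) (Fin n) ℕ) (i0 j0 : Fin n) :
    Matrix (Fin n) (Fin n) ℕ :=
  Matrix.of fun i j => if i = i0 ∧ j = j0 then 1 else M i j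

/-- `J₃ - I₃`. -/
def J3mI3 : Matrix (Fin 3) (Fin 3) ℕ := Matrix.of fun i j => if i = j then 0 else 1

/-- `J₄ - I₄`. -/
def J4mI4 : Matrix (Fin 4) (Fin 4) ℕ := Matrix.of fun i j => if i = j then 0 else 1

/-- `A₃`: the 3×3 all-ones matrix except the (1,1) entry is 0. -/
def A3 : Matrix (Fin 3) (Fin 3) ℕ := Matrix.of fun i j => if i = 0 ∧ j = 0 then 0 else 1

/-- `A₃ ⊕ I₂`. -/
def V5 : Matrix (Fin 5) (Fin 5) ℕ :=
  !![0,1,1,0,0; 1,1,1,0,0; 1,1,1,0,0; 0,0,0,1,0; 0,0,0,0,1]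

/-- `J₃ ⊕ I₂`. -/
def S5 : Matrix (Fin 5) (Fin 5) ℕ :=
  !![1,1,1,0,0; 1,1,1,0,0; 1,1,1,0,0; 0,0,0,1,0; 0,0,0,0,1]

/-- The head block of `W`. -/
def BW : Matrix (Fin 4) (Fin 4) ℕ :=
  !![0,0,1,1; 1,1,0,1; 1,1,1,0; 1,1,0,1]

/-- The head block of `X`. -/
def BX : Matrix (Fin 4) (Fin 4) ℕ :=
  !![0,0,1,1; 1,0,1,1; 1,1,0,1; 1,1,1,0]

/-- The head block of `Y`. -/
def BY : Matrix (Fin 4) (Fin 4) ℕ :=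
  !![0,0,1,1; 1,0,1,1; 1,1,0,0; 1,1,1,1]

/-- `A₃ ⊕ I₁`. -/
def T4 : Matrix (Fin 4) (Fin 4) ℕ :=
  !![0,1,1,0; 1,1,1,0; 1,1,1,0; 0,0,0,1]

/-- `A₄ ⊕ J₂`, where `A₄` is `J₄` with the (1,1) entry changed to 0. -/
def Q6 : Matrix (Fin 6) (Fin 6) ℕ :=
  !![0,1,1,1,0,0; 1,1,1,1,0,0; 1,1,1,1,0,0; 1,1,1,1,0,0; 0,0,0,0,1,1; 0,0,0,0,1,1]

/-- `J₃ ⊕ I₁`. -/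
def M4 : Matrix (Fin 4) (Fin 4) ℕ :=
  !![1,1,1,0; 1,1,1,0; 1,1,1,0; 0,0,0,1]


noncomputable def gfun (k : ℕ) : ℝ := Real.log (Nat.factorial k) / k

lemma log_fact_succ (k : ℕ) :
    Real.log (Nat.factorial (k+1)) = Real.log (Nat.factorial k) + Real.log ((k:ℝ)+1) := by
  rw [Nat.factorial_succ]
  push_cast
  rw [Real.log_mul (by positivity) (by positivity)]
  ring

lemma bern (k : ℕ) : Real.log 2 ≤ ((k:ℝ)+1) * (Real.log ((k:ℝ)+2) - Real.log ((k:ℝ)+1)) := by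
  have hx : ((k:ℝ)+2)/((k:ℝ)+1) = 1 + 1/((k:ℝ)+1) := by
    field_simp
    ring
  have hdiv : Real.log ((k:ℝ)+2) - Real.log ((k:ℝ)+1)
      = Real.log (((k:ℝ)+2)/((k:ℝ)+1)) := (Real.log_div (by positivity) (by positivity)).symm
  have hneg2 : (-2:ℝ) ≤ 1/((k:ℝ)+1) := by
    have h0 : (0:ℝ) ≤ 1/((k:ℝ)+1) := by positivity
    linarith
  have hpow : (2:ℝ) ≤ (1 + 1/((k:ℝ)+1)) ^ (k+1) := by
    have h := one_add_mul_le_pow hneg2 (k+1)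
    have h1 : ((k+1:ℕ):ℝ) * (1/((k:ℝ)+1)) = 1 := by
      push_cast; field_simp
    calc (2:ℝ) = 1 + ((k+1:ℕ):ℝ) * (1/((k:ℝ)+1)) := by rw [h1]; norm_num
    _ ≤ _ := h
  have hlog : Real.log 2 ≤ Real.log ((1 + 1/((k:ℝ)+1)) ^ (k+1)) :=
    Real.log_le_log (by norm_num) hpow
  rw [Real.log_pow] at hlog
  rw [hdiv, hx]
  calc Real.log 2 ≤ ((k+1:ℕ):ℝ) * Real.log (1 + 1/((k:ℝ)+1)) := hlog
  _ = ((k:ℝ)+1) * Real.log (1 + 1/((k:ℝ)+1)) := by push_cast; ring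

lemma a_bound (k : ℕ) :
    (k:ℝ) * Real.log 2 ≤ (k:ℝ) * Real.log ((k:ℝ)+1) - Real.log (Nat.factorial k) := by
  induction k with
  | zero => simp
  | succ k ih =>
      have hb := bern k
      rw [log_fact_succ]
      push_cast
      have h2 : ((k:ℝ)+1+1) = (k:ℝ)+2 := by ring
      rw [h2]
      nlinarith [ih, hb]

lemma key (K Lk c1 c2 : ℝ) (hK : 1 ≤ K)
    (ha : K * Real.log 2 ≤ K * c1 - Lk) (hb : (K+1)*(c2-c1) ≤ 1) :
    (Lk + c1 + c2)/(K+2) - (Lk + c1)/(K+1) ≤ (Lk + c1)/(K+1) - Lk/K := by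
  have hlog2 : (1/2:ℝ) ≤ Real.log 2 := by
    have := Real.log_two_gt_d9; linarith
  rw [div_sub_div _ _ (by positivity) (by positivity),
      div_sub_div _ _ (by positivity : (K:ℝ)+1 ≠ 0) (by positivity : (K:ℝ) ≠ 0)]
  rw [div_le_div_iff₀ (by positivity) (by positivity)]
  nlinarith [ha, hb, hlog2, hK, mul_le_mul_of_nonneg_left hb (by linarith : (0:ℝ) ≤ K),
    mul_le_mul_of_nonneg_left hlog2 (by linarith : (0:ℝ) ≤ K)]

lemma Dstep (k : ℕ) (hk : 1 ≤ k) :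
    gfun (k+2) - gfun (k+1) ≤ gfun (k+1) - gfun k := by
  have hK : (1:ℝ) ≤ (k:ℝ) := by exact_mod_cast hk
  have e0 : gfun k = Real.log (Nat.factorial k) / (k:ℝ) := rfl
  have e1 : gfun (k+1) = (Real.log (Nat.factorial k) + Real.log ((k:ℝ)+1))/((k:ℝ)+1) := by
    unfold gfun; rw [log_fact_succ]; push_cast; ring
  have e2 : gfun (k+2) = (Real.log (Nat.factorial k) + Real.log ((k:ℝ)+1) + Real.log ((k:ℝ)+2))/((k:ℝ)+2) := by
    unfold gfun
    rw [show k+2 = (k+1)+1 from rfl, log_fact_succ, log_fact_succ]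
    push_cast; ring_nf
  have hb : ((k:ℝ)+1) * (Real.log ((k:ℝ)+2) - Real.log ((k:ℝ)+1)) ≤ 1 := by
    have h2 : Real.log ((k:ℝ)+2) - Real.log ((k:ℝ)+1) = Real.log (((k:ℝ)+2)/((k:ℝ)+1)) :=
      (Real.log_div (by positivity) (by positivity)).symm
    have h1 : Real.log (((k:ℝ)+2)/((k:ℝ)+1)) ≤ ((k:ℝ)+2)/((k:ℝ)+1) - 1 :=
      Real.log_le_sub_one_of_pos (by positivity)
    have h3 : ((k:ℝ)+2)/((k:ℝ)+1) - 1 = 1/((k:ℝ)+1) := by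
      field_simp
      norm_num
    have h4 : ((k:ℝ)+1) * (1/((k:ℝ)+1)) = 1 := by field_simp
    rw [h2]
    nlinarith [h1, h3, h4, hK]
  rw [e0, e1, e2]
  exact key (k:ℝ) _ _ _ hK (a_bound k) hb


lemma Dle (j m : ℕ) (hj : 1 ≤ j) :
    gfun (j+m+1) - gfun (j+m) ≤ gfun (j+1) - gfun j := by
  induction m with
  | zero => simp
  | succ m ih =>
      have h := Dstep (j+m) (le_trans hj (Nat.le_add_right _ _))
      have e : j + (m+1) = (j + m) + 1 := by omega
      rw [e]
      calc gfun (j+m+1+1) - gfun (j+m+1) ≤ gfun (j+m+1) - gfun (j+m) := h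
      _ ≤ _ := ih

lemma chord_up (r m : ℕ) (hr : 1 ≤ r) :
    gfun (r+m) ≤ gfun r + (m:ℝ) * (gfun (r+1) - gfun r) := by
  induction m with
  | zero => simp
  | succ m ih =>
      have h := Dle r m hr
      have e : r + (m+1) = (r + m) + 1 := by omega
      rw [e]
      push_cast
      nlinarith [ih, h]

lemma chord_down (k m : ℕ) (hk : 1 ≤ k) :
    gfun k ≤ gfun (k+m) - (m:ℝ) * (gfun (k+m+1) - gfun (k+m)) := by
  induction m with
  | zero => simp
  | succ m ih =>
      have h := Dstep (k+m) (le_trans hk (Nat.le_add_right _ _))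
      have e : k + (m+1) = (k + m) + 1 := by omega
      rw [e]
      push_cast
      have hm : (0:ℝ) ≤ (m:ℝ) + 1 := by positivity
      nlinarith [ih, h, mul_le_mul_of_nonneg_left h hm]

lemma chord (r k : ℕ) (hr : 1 ≤ r) (hk : 1 ≤ k) :
    gfun k ≤ gfun r + ((k:ℝ) - (r:ℝ)) * (gfun (r+1) - gfun r) := by
  rcases le_total r k with h | h
  · obtain ⟨m, rfl⟩ := Nat.exists_eq_add_of_le h
    have := chord_up r m hr
    push_cast
    nlinarith [this]
  · obtain ⟨m, rfl⟩ := Nat.exists_eq_add_of_le h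
    have := chord_down k m hk
    push_cast
    nlinarith [this]

theorem stmt10 (n σ : ℕ) (hn : 1 ≤ n) (r : Fin n → ℕ)
    (hpos : ∀ i, 1 ≤ r i) (hsum : ∑ i, r i = σ) :
    ∏ i, ((r i).factorial : ℝ) ^ ((1 : ℝ) / (r i : ℝ)) ≤
      ((σ / n).factorial : ℝ) ^ (((n * (σ / n + 1) - σ : ℕ) : ℝ) / ((σ / n : ℕ) : ℝ)) *
      ((σ / n + 1).factorial : ℝ) ^
        (((σ - n * (σ / n) : ℕ) : ℝ) / (((σ / n : ℕ) : ℝ) + 1)) := by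
  have hn0 : 0 < n := hn
  set ρ := σ / n with hρdef
  have hσn : n ≤ σ := by
    calc n = ∑ _i : Fin n, 1 := by simp
    _ ≤ ∑ i, r i := Finset.sum_le_sum (fun i _ => hpos i)
    _ = σ := hsum
  have hρ1 : 1 ≤ ρ := (Nat.one_le_div_iff hn0).2 hσn
  have hlo : n * ρ ≤ σ := by
    rw [hρdef, mul_comm]
    exact Nat.div_mul_le_self σ n
  have hhi : σ ≤ n * (ρ + 1) := by
    have h1 : n * ρ + σ % n = σ := by rw [hρdef]; exact Nat.div_add_mod σ n
    have h2 : σ % n < n := Nat.mod_lt σ hn0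
    rw [Nat.mul_add, Nat.mul_one]
    omega
  have hL : ∏ i, ((r i).factorial : ℝ) ^ ((1 : ℝ) / (r i : ℝ))
      = Real.exp (∑ i, gfun (r i)) := by
    rw [Real.exp_sum]
    refine Finset.prod_congr rfl fun i _ => ?_
    rw [Real.rpow_def_of_pos (by positivity)]
    unfold gfun
    rw [mul_one_div]
  have hR : ((ρ.factorial : ℝ)) ^ (((n * (ρ + 1) - σ : ℕ) : ℝ) / ((ρ : ℕ) : ℝ)) *
      (((ρ + 1).factorial : ℝ)) ^ (((σ - n * ρ : ℕ) : ℝ) / (((ρ : ℕ) : ℝ) + 1))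
      = Real.exp (((n * (ρ + 1) - σ : ℕ) : ℝ) * gfun ρ
          + ((σ - n * ρ : ℕ) : ℝ) * gfun (ρ + 1)) := by
    rw [Real.exp_add, Real.rpow_def_of_pos (by positivity),
        Real.rpow_def_of_pos (by positivity)]
    unfold gfun
    push_cast
    congr 1 <;> ring
  rw [hL, hR]
  apply Real.exp_le_exp.mpr
  have hsumle : ∑ i, gfun (r i)
      ≤ ∑ _i : Fin n, gfun ρ
        + (∑ i, ((r i : ℝ) - (ρ : ℝ))) * (gfun (ρ + 1) - gfun ρ) := by
    rw [Finset.sum_mul, ← Finset.sum_add_distrib]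
    exact Finset.sum_le_sum fun i _ => chord ρ (r i) hρ1 (hpos i)
  have h1 : ∑ _i : Fin n, gfun ρ = (n : ℝ) * gfun ρ := by
    simp [Finset.sum_const, nsmul_eq_mul]
  have h2 : ∑ i, ((r i : ℝ) - (ρ : ℝ)) = (σ : ℝ) - (n : ℝ) * (ρ : ℝ) := by
    rw [Finset.sum_sub_distrib]
    have : ∑ i, ((r i : ℝ)) = (σ : ℝ) := by
      rw [← hsum]; push_cast; rfl
    simp [this, Finset.sum_const, nsmul_eq_mul]
  have hx : ((n * (ρ + 1) - σ : ℕ) : ℝ) = (n : ℝ) * ((ρ : ℝ) + 1) - (σ : ℝ) := by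
    rw [Nat.cast_sub hhi]; push_cast; ring
  have hy : ((σ - n * ρ : ℕ) : ℝ) = (σ : ℝ) - (n : ℝ) * (ρ : ℝ) := by
    rw [Nat.cast_sub hlo]; push_cast; ring
  rw [hx, hy]
  rw [h1, h2] at hsumle
  calc ∑ i, gfun (r i)
      ≤ (n : ℝ) * gfun ρ + ((σ : ℝ) - (n : ℝ) * ρ) * (gfun (ρ + 1) - gfun ρ) := hsumle
  _ = ((n : ℝ) * ((ρ : ℝ) + 1) - σ) * gfun ρ + ((σ : ℝ) - (n : ℝ) * ρ) * gfun (ρ + 1) := by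
      ring

end BGM
end

section
/- (Ryser's conjecture, proved via the Brègman–Minc inequality.) Let v and k be positive integers with k dividing v, and let J* be the block-diagonal direct sum of v/k copies of the k×k all-ones matrix J_k. Then J* belongs to 𝒜(v,k), per J* = (k!)^{v/k}, and per A ≤ per J* for every A ∈ 𝒜(v,k). -/
open scoped BigOperators

namespace BGM

/-! The bound is Brègman's inequality `per A ≤ ∏ᵢ (rᵢ!)^(1/rᵢ)` for (0,1)-matrices with row
sums `rᵢ`, proved as by Schrijver. Expanding along row `i` and applying Jensen to `x log x` gives
`per A ^ per A ≤ rᵢ ^ per A * ∏_σ per A(i|σ i)`, where `σ` runs over the permutations carried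
by the ones of `A`. Multiply over `i`, exchange the products and bound each minor by induction:
for fixed `σ`, row `j` keeps its sum `rⱼ` in `n - rⱼ` of the minors `A(i|σ i)`, `i ≠ j`, and
loses a one in the other `rⱼ - 1`, so `rⱼ * (rⱼ - 1)! = rⱼ!` collapses the product to
`(∏ⱼ (rⱼ!)^(1/rⱼ)) ^ (n * per A)`. For `k`-regular matrices the bound is `(k!)^(v/k)`, and `J*`
attains it: its permutations are those preserving each block, `(k!)^(v/k)` of them. -/

open Finset
open scoped Nat

variable {n : ℕ}

def permSupport (A : Matrix (Fin n) (Fin n) ℕ) : Finset (Equiv.Perm (Fin n)) :=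
  {σ | ∀ i, A i (σ i) = 1}

lemma mem_permSupport {A : Matrix (Fin n) (Fin n) ℕ} {σ : Equiv.Perm (Fin n)} :
    σ ∈ permSupport A ↔ ∀ i, A i (σ i) = 1 := by
  simp [permSupport]

namespace IsZeroOne

variable {A : Matrix (Fin n) (Fin n) ℕ}

lemma perm_eq_card_permSupport (hA : IsZeroOne A) : perm A = #(permSupport A) := by
  rw [perm, permSupport, card_filter]
  refine sum_congr rfl fun σ _ => ?_
  split_ifs with h
  · exact prod_eq_one fun i _ => h i
  · obtain ⟨i, hi⟩ := not_forall.mp h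
    exact prod_eq_zero (mem_univ i) ((hA i (σ i)).resolve_right hi)

lemma card_filter_eq_one (hA : IsZeroOne A) (i : Fin n) :
    #{j | A i j = 1} = ∑ j, A i j := by
  rw [card_filter]
  exact sum_congr rfl fun j _ => by rcases hA i j with h | h <;> simp [h]

lemma sum_row_le (hA : IsZeroOne A) (i : Fin n) : ∑ j, A i j ≤ n :=
  hA.card_filter_eq_one i ▸ (card_filter_le _ _).trans_eq (card_fin n)

lemma prod_comp_row {M : Type*} [CommMonoid M] (hA : IsZeroOne A) (i : Fin n) (g : ℕ → M) :
    ∏ j, g (A i j) = g 1 ^ (∑ j, A i j) * g 0 ^ (n - ∑ j, A i j) := by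
  have hsplit : ∀ j, g (A i j) = if A i j = 1 then g 1 else g 0 := fun j => by
    rcases hA i j with h | h <;> simp [h]
  have hcard := card_filter_add_card_filter_not (s := univ) (fun j => A i j = 1)
  rw [card_fin, hA.card_filter_eq_one i] at hcard
  rw [prod_congr rfl fun j _ => hsplit j, prod_ite, prod_const, prod_const,
    hA.card_filter_eq_one i]
  congr 2
  omega

end IsZeroOne

lemma one_le_sum_row_of_mem_permSupport {A : Matrix (Fin n) (Fin n) ℕ}
    {σ : Equiv.Perm (Fin n)} (hσ : σ ∈ permSupport A) (i : Fin n) : 1 ≤ ∑ j, A i j :=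
  mem_permSupport.mp hσ i ▸ single_le_sum (fun j _ => Nat.zero_le (A i j)) (mem_univ (σ i))

def minor (A : Matrix (Fin (n + 1)) (Fin (n + 1)) ℕ) (i j : Fin (n + 1)) :
    Matrix (Fin n) (Fin n) ℕ :=
  A.submatrix i.succAbove j.succAbove

lemma IsZeroOne.minor {A : Matrix (Fin (n + 1)) (Fin (n + 1)) ℕ} (hA : IsZeroOne A)
    (i j : Fin (n + 1)) : IsZeroOne (minor A i j) :=
  fun _ _ => hA _ _

lemma sum_minor_row (A : Matrix (Fin (n + 1)) (Fin (n + 1)) ℕ) (i c : Fin (n + 1))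
    (l : Fin n) :
    ∑ j, minor A i c l j = ∑ j, A (i.succAbove l) j - A (i.succAbove l) c := by
  rw [Fin.sum_univ_succAbove _ c, Nat.add_sub_cancel_left]
  rfl

def expandPerm (τ : Equiv.Perm (Fin n)) (i j : Fin (n + 1)) : Equiv.Perm (Fin (n + 1)) :=
  (finSuccEquiv' i).trans (τ.optionCongr.trans (finSuccEquiv' j).symm)

def shrinkPerm (σ : Equiv.Perm (Fin (n + 1))) (i j : Fin (n + 1)) : Equiv.Perm (Fin n) :=
  Equiv.removeNone ((finSuccEquiv' i).symm.trans (σ.trans (finSuccEquiv' j)))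

section ExpandShrink

variable {i j : Fin (n + 1)}

lemma expandPerm_apply_self (τ : Equiv.Perm (Fin n)) : expandPerm τ i j i = j := by
  simp [expandPerm, finSuccEquiv'_at]

lemma expandPerm_apply_succAbove (τ : Equiv.Perm (Fin n)) (l : Fin n) :
    expandPerm τ i j (i.succAbove l) = j.succAbove (τ l) := by
  simp [expandPerm, finSuccEquiv'_succAbove, finSuccEquiv'_symm_some]

lemma succAbove_shrinkPerm {σ : Equiv.Perm (Fin (n + 1))} (h : σ i = j) (l : Fin n) :
    j.succAbove (shrinkPerm σ i j l) = σ (i.succAbove l) := by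
  obtain ⟨m, hm⟩ := Fin.exists_succAbove_eq fun hc =>
    Fin.succAbove_ne i l (σ.injective (hc.trans h.symm))
  have hsome :
      ((finSuccEquiv' i).symm.trans (σ.trans (finSuccEquiv' j))) (some l) = some m := by
    simp [finSuccEquiv'_symm_some, ← hm, finSuccEquiv'_succAbove]
  have hshrink := Equiv.removeNone_some _ ⟨m, hsome⟩
  rw [hsome, Option.some_inj] at hshrink
  rw [shrinkPerm, hshrink, hm]

lemma expandPerm_shrinkPerm {σ : Equiv.Perm (Fin (n + 1))} (h : σ i = j) :
    expandPerm (shrinkPerm σ i j) i j = σ := by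
  ext x : 1
  rcases Fin.eq_self_or_eq_succAbove i x with rfl | ⟨l, rfl⟩
  · rw [expandPerm_apply_self, h]
  · rw [expandPerm_apply_succAbove, succAbove_shrinkPerm h]

lemma shrinkPerm_expandPerm (τ : Equiv.Perm (Fin n)) :
    shrinkPerm (expandPerm τ i j) i j = τ := by
  ext l : 1
  apply Fin.succAbove_right_injective (p := j)
  rw [succAbove_shrinkPerm (expandPerm_apply_self τ), expandPerm_apply_succAbove]

end ExpandShrink

section Expansion

variable {A : Matrix (Fin (n + 1)) (Fin (n + 1)) ℕ}

lemma card_filter_permSupport_apply_eq (hA : IsZeroOne A) (i j : Fin (n + 1)) :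
    #{σ ∈ permSupport A | σ i = j} = A i j * perm (minor A i j) := by
  rcases hA i j with h0 | h1
  · rw [h0, zero_mul, card_eq_zero, filter_eq_empty_iff]
    rintro σ hσ rfl
    simp [mem_permSupport.mp hσ i] at h0
  · rw [h1, one_mul, hA.minor i j |>.perm_eq_card_permSupport]
    refine card_nbij' (shrinkPerm · i j) (expandPerm · i j) ?_ ?_ ?_ ?_
    · intro σ hσ
      simp only [coe_filter, Set.mem_ofPred_eq, mem_permSupport] at hσ
      refine mem_permSupport.mpr fun l => ?_
      simpa only [minor, Matrix.submatrix_apply, succAbove_shrinkPerm hσ.2] using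
        hσ.1 (i.succAbove l)
    · intro τ hτ
      simp only [coe_filter, Set.mem_ofPred_eq, mem_permSupport, expandPerm_apply_self, and_true]
      intro x
      rcases Fin.eq_self_or_eq_succAbove i x with rfl | ⟨l, rfl⟩
      · rwa [expandPerm_apply_self]
      · rw [expandPerm_apply_succAbove]
        exact mem_permSupport.mp hτ l
    · intro σ hσ
      exact expandPerm_shrinkPerm (mem_filter.mp hσ).2
    · intro τ _
      exact shrinkPerm_expandPerm τ

lemma perm_eq_sum_mul_perm_minor (hA : IsZeroOne A) (i : Fin (n + 1)) :
    perm A = ∑ j, A i j * perm (minor A i j) := by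
  rw [hA.perm_eq_card_permSupport,
    card_eq_sum_card_fiberwise fun σ _ => mem_coe.mpr (mem_univ (σ i))]
  exact sum_congr rfl fun j _ => card_filter_permSupport_apply_eq hA i j

lemma prod_permSupport_perm_minor (hA : IsZeroOne A) (i : Fin (n + 1)) :
    ∏ σ ∈ permSupport A, perm (minor A i (σ i)) =
      ∏ j, (A i j * perm (minor A i j)) ^ (A i j * perm (minor A i j)) := by
  rw [← prod_fiberwise_of_maps_to (g := (· i)) (t := univ) fun σ _ => mem_univ (σ i)]
  refine prod_congr rfl fun j _ => ?_
  rw [prod_congr rfl fun σ hσ => by rw [(mem_filter.mp hσ).2], prod_const,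
    card_filter_permSupport_apply_eq hA]
  rcases hA i j with h | h <;> simp [h]

end Expansion

theorem sum_pow_sum_le_card_pow_mul_prod_pow_self {ι : Type*} (s : Finset ι) (t : ι → ℕ) :
    (∑ j ∈ s, t j) ^ (∑ j ∈ s, t j) ≤ #s ^ (∑ j ∈ s, t j) * ∏ j ∈ s, t j ^ t j := by
  obtain hT | hT := Nat.eq_zero_or_pos (∑ j ∈ s, t j)
  · rw [hT, pow_zero, pow_zero, one_mul]
    exact one_le_prod' fun j _ => Nat.pow_self_pos
  have hs := nonempty_of_sum_ne_zero hT.ne'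
  have hc : (0 : ℝ) < #s := by exact_mod_cast hs.card_pos
  have hjensen := Real.convexOn_mul_log.map_sum_le (t := s) (w := fun _ => (#s : ℝ)⁻¹)
    (p := fun j => (t j : ℝ)) (fun _ _ => by positivity) (by simp [hc.ne'])
    (fun j _ => Set.mem_Ici.mpr (Nat.cast_nonneg _))
  simp only [smul_eq_mul, ← mul_sum, ← Nat.cast_sum] at hjensen
  rw [mul_assoc, mul_le_mul_iff_of_pos_left (inv_pos.mpr hc),
    Real.log_mul (inv_pos.mpr hc).ne' (by exact_mod_cast hT.ne'), Real.log_inv] at hjensen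
  rw [← Nat.cast_le (α := ℝ), ← Real.log_le_log_iff (by positivity)
    (Nat.cast_pos.mpr (mul_pos (pow_pos hs.card_pos _) (prod_pos fun j _ => Nat.pow_self_pos)))]
  have hpow : ∀ j, ((t j : ℝ) ^ t j) ≠ 0 := fun j => by exact_mod_cast Nat.pow_self_pos.ne'
  push_cast at hjensen ⊢
  rw [Real.log_mul (by positivity) (prod_ne_zero_iff.mpr fun j _ => hpow j),
    Real.log_prod fun j _ => hpow j]
  simp only [Real.log_pow, Nat.cast_sum]
  linarith

lemma perm_pow_perm_le {A : Matrix (Fin (n + 1)) (Fin (n + 1)) ℕ} (hA : IsZeroOne A)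
    (i : Fin (n + 1)) :
    perm A ^ perm A ≤ (∑ j, A i j) ^ perm A * ∏ σ ∈ permSupport A, perm (minor A i (σ i)) := by
  have hsupp : ∀ j, A i j * perm (minor A i j) ≠ 0 → A i j = 1 := fun j hj =>
    (hA i j).resolve_left (left_ne_zero_of_mul hj)
  have hsum : ∑ j with A i j = 1, A i j * perm (minor A i j) = perm A := by
    rw [sum_filter_of_ne fun j _ => hsupp j, ← perm_eq_sum_mul_perm_minor hA]
  have hprod :
      ∏ j with A i j = 1, (A i j * perm (minor A i j)) ^ (A i j * perm (minor A i j)) =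
      ∏ σ ∈ permSupport A, perm (minor A i (σ i)) := by
    rw [prod_filter_of_ne fun j _ hj => hsupp j fun h => hj (by rw [h, pow_zero]),
      prod_permSupport_perm_minor hA]
  simpa only [hsum, hprod, hA.card_filter_eq_one] using
    sum_pow_sum_le_card_pow_mul_prod_pow_self {j | A i j = 1} fun j => A i j * perm (minor A i j)

noncomputable def factorialRoot (r : ℕ) : ℝ := (r ! : ℝ) ^ (r : ℝ)⁻¹

lemma factorialRoot_pos (r : ℕ) : 0 < factorialRoot r := by
  unfold factorialRoot; positivity

lemma factorialRoot_pow_self (r : ℕ) : factorialRoot r ^ r = r ! := by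
  rcases eq_or_ne r 0 with rfl | hr
  · simp
  · exact Real.rpow_inv_natCast_pow (by positivity) hr

lemma natCast_mul_factorialRoot_pow {r N : ℕ} (hr : 1 ≤ r) (hrN : r ≤ N) :
    r * (factorialRoot (r - 1) ^ (r - 1) * factorialRoot r ^ (N - r)) = factorialRoot r ^ N := by
  obtain ⟨s, rfl⟩ : ∃ s, r = s + 1 := ⟨r - 1, by omega⟩
  rw [Nat.add_sub_cancel, factorialRoot_pow_self, ← mul_assoc, ← Nat.cast_mul,
    ← Nat.factorial_succ, ← factorialRoot_pow_self, ← pow_add, Nat.add_sub_cancel' hrN]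

section Induction

variable {A : Matrix (Fin (n + 1)) (Fin (n + 1)) ℕ}
  (IH : ∀ B : Matrix (Fin n) (Fin n) ℕ, IsZeroOne B →
    (perm B : ℝ) ≤ ∏ l, factorialRoot (∑ j, B l j))
include IH

lemma perm_minor_mul_factorialRoot_le (hA : IsZeroOne A) (i c : Fin (n + 1)) :
    perm (minor A i c) * factorialRoot (∑ j, A i j - A i c) ≤
      ∏ l, factorialRoot (∑ j, A l j - A l c) := by
  rw [Fin.prod_univ_succAbove _ i, mul_comm]
  refine mul_le_mul_of_nonneg_left ?_ (factorialRoot_pos _).le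
  simpa only [sum_minor_row] using IH _ (hA.minor i c)

lemma prod_perm_minor_le (hA : IsZeroOne A) {σ : Equiv.Perm (Fin (n + 1))}
    (hσ : σ ∈ permSupport A) :
    ∏ i, (perm (minor A i (σ i)) : ℝ) ≤
      ∏ j, (factorialRoot (∑ c, A j c - 1) ^ (∑ c, A j c - 1) *
        factorialRoot (∑ c, A j c) ^ (n + 1 - ∑ c, A j c)) := by
  set r : Fin (n + 1) → ℕ := fun j => ∑ c, A j c
  have hcol : ∏ i, ∏ j, factorialRoot (r j - A j (σ i)) =
      ∏ j, factorialRoot (r j - 1) ^ r j * factorialRoot (r j) ^ (n + 1 - r j) := by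
    rw [prod_comm]
    refine prod_congr rfl fun j _ => ?_
    rw [Equiv.prod_comp σ fun c => factorialRoot (r j - A j c),
      hA.prod_comp_row j fun a => factorialRoot (r j - a), Nat.sub_zero]
  -- Multiplying by `∏ j, factorialRoot (r j - 1)` completes each product over `j ≠ i`
  -- (the induction hypothesis on the minor at `(i, σ i)`) to a product over all `j`.
  refine le_of_mul_le_mul_right (a := ∏ j, factorialRoot (r j - 1)) ?_
    (prod_pos fun j _ => factorialRoot_pos _)
  calc (∏ i, (perm (minor A i (σ i)) : ℝ)) * ∏ i, factorialRoot (r i - 1)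
      = ∏ i, perm (minor A i (σ i)) * factorialRoot (r i - A i (σ i)) := by
        simp only [mem_permSupport.mp hσ, prod_mul_distrib]
    _ ≤ ∏ i, ∏ j, factorialRoot (r j - A j (σ i)) :=
        prod_le_prod (fun i _ => mul_nonneg (Nat.cast_nonneg _) (factorialRoot_pos _).le)
          fun i _ => perm_minor_mul_factorialRoot_le IH hA i (σ i)
    _ = (∏ j, factorialRoot (r j - 1) ^ (r j - 1) * factorialRoot (r j) ^ (n + 1 - r j)) *
          ∏ j, factorialRoot (r j - 1) := by
        rw [hcol, ← prod_mul_distrib]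
        refine prod_congr rfl fun j _ => ?_
        have hr : 1 ≤ r j := one_le_sum_row_of_mem_permSupport hσ j
        obtain ⟨s, hs⟩ := Nat.exists_eq_add_of_le' hr
        rw [hs, Nat.add_sub_cancel, pow_succ]
        ring

end Induction

theorem perm_le_prod_factorialRoot (A : Matrix (Fin n) (Fin n) ℕ) (hA : IsZeroOne A) :
    (perm A : ℝ) ≤ ∏ i, factorialRoot (∑ j, A i j) := by
  induction n with
  | zero => simp [perm]
  | succ n IH =>
    obtain hS | ⟨σ₀, hσ₀⟩ := (permSupport A).eq_empty_or_nonempty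
    · rw [hA.perm_eq_card_permSupport, hS, card_empty, Nat.cast_zero]
      exact prod_nonneg fun i _ => (factorialRoot_pos _).le
    have hp : perm A ≠ 0 := by
      rw [hA.perm_eq_card_permSupport]; exact (card_pos.mpr ⟨σ₀, hσ₀⟩).ne'
    set p := perm A
    set r : Fin (n + 1) → ℕ := fun j => ∑ c, A j c
    set G : Fin (n + 1) → ℝ := fun j =>
      factorialRoot (r j - 1) ^ (r j - 1) * factorialRoot (r j) ^ (n + 1 - r j)
    have hrG : ∀ j, r j * G j = factorialRoot (r j) ^ (n + 1) := fun j =>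
      natCast_mul_factorialRoot_pow (one_le_sum_row_of_mem_permSupport hσ₀ j) (hA.sum_row_le j)
    refine le_of_pow_le_pow_left₀ (Nat.mul_ne_zero (Nat.succ_ne_zero n) hp)
      (prod_nonneg fun j _ => (factorialRoot_pos _).le) ?_
    calc (p : ℝ) ^ ((n + 1) * p) = ∏ _i : Fin (n + 1), (p : ℝ) ^ p := by
          rw [prod_const, card_fin, ← pow_mul, mul_comm]
      _ ≤ ∏ i, (r i : ℝ) ^ p * ∏ σ ∈ permSupport A, (perm (minor A i (σ i)) : ℝ) :=
          prod_le_prod (fun i _ => by positivity) fun i _ => by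
            exact_mod_cast perm_pow_perm_le hA i
      _ = (∏ i, (r i : ℝ) ^ p) *
            ∏ σ ∈ permSupport A, ∏ i, (perm (minor A i (σ i)) : ℝ) := by
          rw [prod_mul_distrib, prod_comm]
      _ ≤ (∏ i, (r i : ℝ) ^ p) * ∏ _σ ∈ permSupport A, ∏ j, G j := by
          refine mul_le_mul_of_nonneg_left ?_ (by positivity)
          exact prod_le_prod (fun σ _ => by positivity) fun σ hσ =>
            prod_perm_minor_le IH hA hσ
      _ = ∏ j, ((r j : ℝ) * G j) ^ p := by
          rw [prod_const, ← hA.perm_eq_card_permSupport, ← prod_pow, ← prod_mul_distrib]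
          simp only [mul_pow, p]
      _ = (∏ j, factorialRoot (r j)) ^ ((n + 1) * p) := by
          simp only [hrG, ← pow_mul, prod_pow]

lemma perm_le_factorial_pow_of_sum_row_eq {k : ℕ} (hdvd : k ∣ n)
    {A : Matrix (Fin n) (Fin n) ℕ} (hA : IsZeroOne A) (hrow : ∀ i, ∑ j, A i j = k) :
    perm A ≤ k ! ^ (n / k) := by
  have h := perm_le_prod_factorialRoot A hA
  have hpow : factorialRoot k ^ n = (k ! : ℝ) ^ (n / k) := by
    rw [← factorialRoot_pow_self, ← pow_mul, Nat.mul_div_cancel' hdvd]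
  rw [prod_congr rfl fun i _ => by rw [hrow i], prod_const, card_fin, hpow] at h
  exact_mod_cast h

section BlockOnes

variable {ι : Type*} [DecidableEq ι]

def blockOnes (f : Fin n → ι) : Matrix (Fin n) (Fin n) ℕ :=
  Matrix.of fun i j => if f i = f j then 1 else 0

lemma isZeroOne_blockOnes (f : Fin n → ι) : IsZeroOne (blockOnes f) := fun i j => by
  by_cases h : f i = f j <;> simp [blockOnes, h]

lemma sum_blockOnes_row (f : Fin n → ι) (i : Fin n) :
    ∑ j, blockOnes f i j = Fintype.card {j // f j = f i} := by
  simp [blockOnes, Fintype.card_subtype, eq_comm]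

lemma blockOnes_mem_Aclass {f : Fin n → ι} {k : ℕ}
    (hf : ∀ a, Fintype.card {i // f i = a} = k) : blockOnes f ∈ Aclass n k := by
  have hsymm : ∀ i j, blockOnes f i j = blockOnes f j i := fun i j => by
    simp only [blockOnes, Matrix.of_apply, eq_comm]
  refine ⟨isZeroOne_blockOnes f, fun i => (sum_blockOnes_row f i).trans (hf _), fun j => ?_⟩
  simpa only [hsymm _ j] using (sum_blockOnes_row f j).trans (hf _)

lemma perm_blockOnes [Fintype ι] (f : Fin n → ι) :
    perm (blockOnes f) = ∏ a, (Fintype.card {i // f i = a})! := by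
  rw [(isZeroOne_blockOnes f).perm_eq_card_permSupport, ← DomMulAct.stabilizer_card f,
    Fintype.card_subtype]
  congr 1
  ext σ
  simp [mem_permSupport, blockOnes, funext_iff, eq_comm]

end BlockOnes

lemma card_subtype_fst_symm_eq {α β γ : Type*} [Fintype α] [DecidableEq α] [Fintype β]
    [Fintype γ] (e : α × β ≃ γ) (a : α) :
    Fintype.card {x // (Prod.fst ∘ e.symm) x = a} = Fintype.card β := by
  rw [Fintype.card_congr (e.symm.subtypeEquiv (p := fun x => (Prod.fst ∘ e.symm) x = a)
    (q := fun y => y.1 = a) fun _ => Iff.rfl)]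
  simp [Fintype.card_congr (Equiv.prodSubtypeFstEquivSubtypeProd (p := (· = a)))]

lemma blockIdx_replicate {m k i : ℕ} (hk : 0 < k) (hi : i < m * k) :
    blockIdx (List.replicate m k) i = i / k := by
  induction m generalizing i with
  | zero => simp at hi
  | succ m ih =>
    rw [List.replicate_succ, blockIdx]
    split_ifs with h
    · exact (Nat.div_eq_of_lt h).symm
    · rw [ih (by rw [Nat.succ_mul] at hi; omega), Nat.div_eq_sub_div hk (not_lt.mp h)]

lemma listBlocks_replicate {m k v : ℕ} (hk : 0 < k) (hv : m * k = v) :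
    listBlocks v (List.replicate m k) =
      blockOnes (Prod.fst ∘ (finProdFinEquiv.trans (finCongr hv)).symm) := by
  ext i j
  have hlt : ∀ x : Fin v, (x : ℕ) < m * k := fun x => hv ▸ x.isLt
  simp only [listBlocks, blockOnes, Matrix.of_apply, blockIdx_replicate hk (hlt _),
    Function.comp_apply, Equiv.symm_trans_apply, finCongr_symm, finProdFinEquiv_symm_apply,
    Fin.ext_iff, Fin.coe_divNat, finCongr_apply, Fin.val_cast]

theorem stmt15_general (v k : ℕ) (hk : 0 < k) (hdvd : k ∣ v) :
    listBlocks v (List.replicate (v / k) k) ∈ Aclass v k ∧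
    perm (listBlocks v (List.replicate (v / k) k)) = k.factorial ^ (v / k) ∧
    ∀ A ∈ Aclass v k, perm A ≤ perm (listBlocks v (List.replicate (v / k) k)) := by
  have hv : v / k * k = v := Nat.div_mul_cancel hdvd
  have hfib := card_subtype_fst_symm_eq (finProdFinEquiv.trans (finCongr hv))
  simp only [Fintype.card_fin] at hfib
  have hperm : perm (listBlocks v (List.replicate (v / k) k)) = k ! ^ (v / k) := by
    rw [listBlocks_replicate hk hv, perm_blockOnes]
    simp only [hfib, prod_const, card_fin]
  refine ⟨listBlocks_replicate hk hv ▸ blockOnes_mem_Aclass hfib, hperm, fun A hA => ?_⟩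
  exact hperm ▸ perm_le_factorial_pow_of_sum_row_eq hdvd hA.1 hA.2.1

theorem stmt15 (v k : ℕ) (hv : 0 < v) (hk : 0 < k) (hdvd : k ∣ v) :
    listBlocks v (List.replicate (v / k) k) ∈ Aclass v k ∧
    perm (listBlocks v (List.replicate (v / k) k)) = k.factorial ^ (v / k) ∧
    ∀ A ∈ Aclass v k, perm A ≤ perm (listBlocks v (List.replicate (v / k) k)) :=
  stmt15_general v k hk hdvd

end BGM
end
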